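/- arXiv:2104.02519 — 11 statements merged into one kernel-verified Lean document; each statement's English description precedes it below -/
import Mathlib

section
/- Let E be a real inner product space, p ≥ 1 an integer, and S : E^p → ℝ a continuous symmetric p-multilinear form. Then the supremum of |S[v, ..., v]| over unit vectors v ∈ E equals the operator norm of S, i.e. sup_{‖v‖=1} |S[v]^p| = sup_{‖v_1‖ = ... = ‖v_p‖ = 1} |S[v_1, ..., v_p]|. -/
/-!
Restricting `S` to the span of a tuple of unit vectors, we may assume `E` finite-dimensional, so
that maxima over unit tuples exist. Among the unit tuples `w` maximizing `|S w|`, take one that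
maximizes `‖∑ k, w k‖`. Negating an entry does not change `|S w|`, so `⟪∑ k, w k, w i⟫ ≥ 1` for
every `i`. If two entries `w i ≠ w j` differed, freezing the other entries would give a symmetric
bilinear form that attains its bound at `(w i, w j)`, hence also on the diagonal at the
normalized sum `u` of `w i` and `w j`; replacing both entries by `u` keeps `|S w|` maximal and
strictly increases `‖∑ k, w k‖`. So the maximizer is constant.
-/

open Function
open scoped RealInnerProductSpace

theorem Finset.sum_univ_update {ι M : Type*} [Fintype ι] [DecidableEq ι] [AddCommGroup M]
    (f : ι → M) (k : ι) (x : M) : ∑ i, update f k x i = ∑ i, f i - f k + x := by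
  rw [sum_update_of_mem (mem_univ k), sum_eq_sum_sdiff_singleton_add (mem_univ k) f]
  abel

theorem norm_update_eq_one {ι E : Type*} [DecidableEq ι] [Norm E] {w : ι → E}
    (hw : ∀ k, ‖w k‖ = 1) {x : E} (hx : ‖x‖ = 1) (i : ι) : ∀ k, ‖update w i x k‖ = 1 :=
  (forall_update_iff w fun _ y => ‖y‖ = 1).2 ⟨hx, fun k _ => hw k⟩

namespace MultilinearMap

variable {R ι M N : Type*} [CommSemiring R] [AddCommMonoid M] [Module R M] [AddCommMonoid N]
  [Module R N] [DecidableEq ι]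

def toBilinearMap (S : MultilinearMap R (fun _ : ι => M) N) (w : ι → M) {i j : ι} (hij : i ≠ j) :
    M →ₗ[R] M →ₗ[R] N :=
  LinearMap.mk₂ R (fun x y => S (update (update w i x) j y))
    (fun x x' y => by simp only [update_comm hij, S.map_update_add])
    (fun c x y => by simp only [update_comm hij, S.map_update_smul])
    (fun x y y' => S.map_update_add _ j y y')
    (fun c x y => S.map_update_smul _ j c y)

@[simp]
theorem toBilinearMap_apply (S : MultilinearMap R (fun _ : ι => M) N) (w : ι → M) {i j : ι}
    (hij : i ≠ j) (x y : M) : S.toBilinearMap w hij x y = S (update (update w i x) j y) :=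
  rfl

theorem toBilinearMap_comm {S : MultilinearMap R (fun _ : ι => M) N}
    (hS : ∀ (σ : Equiv.Perm ι) (v : ι → M), S (fun k => v (σ k)) = S v) (w : ι → M) {i j : ι}
    (hij : i ≠ j) (x y : M) : S.toBilinearMap w hij x y = S.toBilinearMap w hij y x := by
  rw [toBilinearMap_apply, toBilinearMap_apply, ← hS (Equiv.swap i j)]
  congr 1
  ext k
  rcases eq_or_ne k i with rfl | hki
  · simp [update_of_ne hij]
  rcases eq_or_ne k j with rfl | hkj
  · simp [update_of_ne hki.symm]
  · simp [Equiv.swap_apply_of_ne_of_ne hki hkj, update_of_ne hki, update_of_ne hkj]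

end MultilinearMap

section InnerProductSpace

variable {E : Type*} [NormedAddCommGroup E] [InnerProductSpace ℝ E]

theorem abs_apply_self_le_mul_norm_sq {B : E →ₗ[ℝ] E →ₗ[ℝ] ℝ} {N : ℝ}
    (hN : ∀ z, ‖z‖ = 1 → |B z z| ≤ N) (z : E) : |B z z| ≤ N * ‖z‖ ^ 2 := by
  rcases eq_or_ne z 0 with rfl | hz
  · simp
  have hz' : ‖z‖ ≠ 0 := norm_ne_zero_iff.2 hz
  have hscale : B z z = ‖z‖ ^ 2 * B (‖z‖⁻¹ • z) (‖z‖⁻¹ • z) := by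
    simp only [map_smul, LinearMap.smul_apply, smul_eq_mul]
    field_simp
  rw [hscale, abs_mul, abs_of_nonneg (sq_nonneg _), mul_comm]
  exact mul_le_mul_of_nonneg_right (hN _ (norm_smul_inv_norm hz)) (sq_nonneg _)

/-- Polarization writes `4 B x y` as `B (x + y) (x + y) - B (x - y) (x - y)`, and by the
parallelogram law the bounds `N ‖x ± y‖²` of these two terms add up to `4 N = 4 |B x y|`, so both
are attained. -/
theorem apply_normalize_add_eq_of_abs_apply_eq {B : E →ₗ[ℝ] E →ₗ[ℝ] ℝ}
    (hB : ∀ x y, B x y = B y x) {N : ℝ} (hN : ∀ z, ‖z‖ = 1 → |B z z| ≤ N) {x y : E}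
    (hx : ‖x‖ = 1) (hy : ‖y‖ = 1) (hxy : |B x y| = N) (hxy0 : x + y ≠ 0) :
    B (‖x + y‖⁻¹ • (x + y)) (‖x + y‖⁻¹ • (x + y)) = B x y := by
  have hbound := abs_apply_self_le_mul_norm_sq hN
  have hpolar : B (x + y) (x + y) - B (x - y) (x - y) = 4 * B x y := by
    simp only [map_add, map_sub, LinearMap.add_apply, LinearMap.sub_apply, hB y x]
    ring
  have hpar : N * ‖x + y‖ ^ 2 + N * ‖x - y‖ ^ 2 = 4 * N := by
    rw [← mul_add, parallelogram_law_with_norm ℝ, hx, hy]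
    ring
  have hadd := abs_le.1 (hbound (x + y))
  have hsub := abs_le.1 (hbound (x - y))
  have hdiag : B (x + y) (x + y) = B x y * ‖x + y‖ ^ 2 := by
    rcases (abs_eq (hxy ▸ abs_nonneg _)).1 hxy with h | h <;> rw [h] <;> linarith
  have hnorm : ‖x + y‖ ≠ 0 := norm_ne_zero_iff.2 hxy0
  simp only [map_smul, LinearMap.smul_apply, smul_eq_mul, hdiag]
  field_simp

variable {ι : Type*} [DecidableEq ι]

theorem MultilinearMap.apply_update_update_normalize_eq {S : MultilinearMap ℝ (fun _ : ι => E) ℝ}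
    (hS : ∀ (σ : Equiv.Perm ι) (v : ι → E), S (fun k => v (σ k)) = S v) {N : ℝ}
    (hN : ∀ v : ι → E, (∀ k, ‖v k‖ = 1) → |S v| ≤ N) {w : ι → E} (hw : ∀ k, ‖w k‖ = 1)
    (hwN : |S w| = N) {i j : ι} (hij : i ≠ j) (h0 : w i + w j ≠ 0) :
    S (update (update w i (‖w i + w j‖⁻¹ • (w i + w j))) j (‖w i + w j‖⁻¹ • (w i + w j)))
      = S w := by
  have hself : S.toBilinearMap w hij (w i) (w j) = S w := by
    rw [toBilinearMap_apply, update_eq_self, update_eq_self]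
  rw [← toBilinearMap_apply _ _ hij, ← hself]
  refine apply_normalize_add_eq_of_abs_apply_eq (S.toBilinearMap_comm hS w hij) (fun z hz => ?_)
    (hw i) (hw j) (hself ▸ hwN) h0
  exact hN _ (norm_update_eq_one (norm_update_eq_one hw hz i) hz j)

variable [Fintype ι]

theorem one_le_inner_sum_of_norm_sum_update_neg_le {w : ι → E} {k : ι} (hk : ‖w k‖ = 1)
    (h : ‖∑ i, update w k (-w k) i‖ ≤ ‖∑ i, w i‖) : 1 ≤ ⟪∑ i, w i, w k⟫ := by
  have hsum : ∑ i, update w k (-w k) i = ∑ i, w i - (2 : ℝ) • w k := by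
    rw [Finset.sum_univ_update]
    module
  have hsq := pow_le_pow_left₀ (norm_nonneg _) h 2
  rw [hsum, norm_sub_sq_real, real_inner_smul_right, norm_smul, hk] at hsq
  norm_num at hsq
  linarith

/-- The replacement adds `(2 / ‖w i + w j‖ - 1) • (w i + w j)` to the sum of the tuple, and the
coefficient is positive because `‖w i + w j‖ < 2`. -/
theorem norm_sum_lt_norm_sum_update_update {w : ι → E} {i j : ι} (hij : i ≠ j)
    (hi : ‖w i‖ = 1) (hj : ‖w j‖ = 1) (hne : w i ≠ w j) (hpos : 0 < ⟪∑ k, w k, w i + w j⟫) :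
    ‖∑ k, w k‖ < ‖∑ k, update (update w i (‖w i + w j‖⁻¹ • (w i + w j))) j
      (‖w i + w j‖⁻¹ • (w i + w j)) k‖ := by
  set a := w i + w j
  set r := ‖a‖ with hr
  have ha : a ≠ 0 := by
    rintro h
    simp [h] at hpos
  have hr0 : 0 < r := norm_pos_iff.2 ha
  have hr2 : r < 2 := by
    have hsub : 0 < ‖w i - w j‖ := norm_pos_iff.2 (sub_ne_zero.2 hne)
    have hpar := parallelogram_law_with_norm ℝ (w i) (w j)
    rw [hi, hj] at hpar
    nlinarith
  have hc : 0 < 2 * r⁻¹ - 1 := by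
    have : 1 < 2 * r⁻¹ := by rw [← div_eq_mul_inv]; exact (one_lt_div hr0).2 hr2
    linarith
  have hsum : ∑ k, update (update w i (r⁻¹ • a)) j (r⁻¹ • a) k
      = ∑ k, w k + (2 * r⁻¹ - 1) • a := by
    rw [Finset.sum_univ_update, Finset.sum_univ_update, update_of_ne hij.symm]
    module
  rw [hsum, ← sq_lt_sq₀ (norm_nonneg _) (norm_nonneg _), norm_add_sq_real,
    real_inner_smul_right, norm_smul, Real.norm_of_nonneg hc.le, ← hr]
  have := mul_pos hc hpos
  have := mul_pos (mul_pos hc hr0) (mul_pos hc hr0)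
  nlinarith

namespace ContinuousMultilinearMap

variable [Nonempty ι] {S : ContinuousMultilinearMap ℝ (fun _ : ι => E) ℝ}
  (hS : ∀ (σ : Equiv.Perm ι) (v : ι → E), S (fun k => v (σ k)) = S v)
include hS

theorem exists_abs_apply_le_abs_apply_const_of_finiteDimensional [FiniteDimensional ℝ E]
    {v : ι → E} (hv : ∀ k, ‖v k‖ = 1) : ∃ x : E, ‖x‖ = 1 ∧ |S v| ≤ |S fun _ => x| := by
  set C := Set.univ.pi fun _ : ι => Metric.sphere (0 : E) 1
  have memC : ∀ w, w ∈ C ↔ ∀ k, ‖w k‖ = 1 := by simp [C]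
  have hC : IsCompact C := isCompact_univ_pi fun _ => isCompact_sphere 0 1
  have hcont : Continuous fun w => |S w| := continuous_abs.comp S.cont
  obtain ⟨w₀, hw₀, hmax₀⟩ := hC.exists_isMaxOn ⟨v, (memC v).2 hv⟩ hcont.continuousOn
  have hbound : ∀ u, (∀ k, ‖u k‖ = 1) → |S u| ≤ |S w₀| := fun u hu => hmax₀ ((memC u).2 hu)
  have hK : IsCompact (C ∩ {w | |S w| = |S w₀|}) :=
    hC.inter_right (isClosed_eq hcont continuous_const)
  have hsum : Continuous fun w : ι → E => ‖∑ k, w k‖ := by fun_prop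
  obtain ⟨w, ⟨hwC, hwN⟩, hmax⟩ := hK.exists_isMaxOn ⟨w₀, hw₀, rfl⟩ hsum.continuousOn
  have hw := (memC w).1 hwC
  have hflip : ∀ k, |S (update w k (-w k))| = |S w₀| := fun k => by
    rw [← hwN, ← coe_coe, MultilinearMap.map_update_neg, update_eq_self, abs_neg]
  have hinner : ∀ k, 1 ≤ ⟪∑ i, w i, w k⟫ := fun k =>
    one_le_inner_sum_of_norm_sum_update_neg_le (hw k)
      (hmax ⟨(memC _).2 (norm_update_eq_one hw (by rw [norm_neg, hw k]) k), hflip k⟩)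
  have hconst : ∀ i j, w i = w j := by
    intro i j
    by_contra hne
    have hij : i ≠ j := by rintro rfl; exact hne rfl
    have hpos : 0 < ⟪∑ k, w k, w i + w j⟫ := by
      rw [inner_add_right]; linarith [hinner i, hinner j]
    have h0 : w i + w j ≠ 0 := by rintro h; simp [h] at hpos
    have hu := norm_smul_inv_norm (𝕜 := ℝ) h0
    refine (norm_sum_lt_norm_sum_update_update hij (hw i) (hw j) hne hpos).not_ge
      (hmax ⟨(memC _).2 (norm_update_eq_one (norm_update_eq_one hw hu i) hu j), ?_⟩)
    rw [Set.mem_ofPred_eq, ← hwN]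
    exact congrArg abs (S.toMultilinearMap.apply_update_update_normalize_eq hS hbound hw hwN hij h0)
  obtain ⟨k⟩ := ‹Nonempty ι›
  refine ⟨w k, hw k, ?_⟩
  rw [show (fun _ => w k) = w from funext (hconst k), hwN]
  exact hbound v hv

theorem exists_abs_apply_le_abs_apply_const {v : ι → E} (hv : ∀ k, ‖v k‖ = 1) :
    ∃ x : E, ‖x‖ = 1 ∧ |S v| ≤ |S fun _ => x| := by
  set F := Submodule.span ℝ (Set.range v)
  have : FiniteDimensional ℝ F := FiniteDimensional.span_of_finite ℝ (Set.finite_range v)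
  obtain ⟨x, hx, hle⟩ :=
    exists_abs_apply_le_abs_apply_const_of_finiteDimensional (S := S.compContinuousLinearMap
      fun _ => F.subtypeL) (fun σ w => hS σ fun k => w k)
      (v := fun k => ⟨v k, Submodule.subset_span (Set.mem_range_self k)⟩) hv
  exact ⟨x, hx, hle⟩

end ContinuousMultilinearMap

end InnerProductSpace

/-- **Banach's theorem for symmetric tensors.**  For a continuous symmetric
`p`-multilinear form `S` on a real inner product space `E` (with `p ≥ 1`), the
supremum of `|S[v, …, v]|` over unit vectors equals the supremum of
`|S[v₁, …, v_p]|` over `p`-tuples of unit vectors (the operator norm). -/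
theorem banach_symmetric_tensor_norm
    {E : Type*} [NormedAddCommGroup E] [InnerProductSpace ℝ E]
    (p : ℕ) (hp : 1 ≤ p)
    (S : ContinuousMultilinearMap ℝ (fun _ : Fin p => E) ℝ)
    (hsymm : ∀ (σ : Equiv.Perm (Fin p)) (v : Fin p → E), S (fun i => v (σ i)) = S v) :
    sSup {y : ℝ | ∃ v : E, ‖v‖ = 1 ∧ y = |S (fun _ => v)|}
      = sSup {y : ℝ | ∃ v : Fin p → E, (∀ i, ‖v i‖ = 1) ∧ y = |S v|} := by
  have : Nonempty (Fin p) := ⟨⟨0, hp⟩⟩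
  refine csSup_eq_csSup_of_forall_exists_le ?_ ?_
  · rintro _ ⟨x, hx, rfl⟩
    exact ⟨_, ⟨fun _ => x, fun _ => hx, rfl⟩, le_rfl⟩
  · rintro _ ⟨v, hv, rfl⟩
    obtain ⟨x, hx, hle⟩ := S.exists_abs_apply_le_abs_apply_const hsymm hv
    exact ⟨_, ⟨x, hx, rfl⟩, hle⟩
end

section
/- For every real number δ > 0 and every integer j ≥ 1, one has min(δ, 1) ≤ Σ_{ℓ=1}^{j} δ^ℓ/ℓ! < 2·max(δ, δ^j). -/
lemma two_pow_pred_le_factorial (n : ℕ) : 2 ^ (n - 1) ≤ Nat.factorial n := by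
  induction n with
  | zero => simp
  | succ n ih =>
    cases n with
    | zero => simp [Nat.factorial]
    | succ m =>
      rw [Nat.succ_sub_one, Nat.factorial_succ]
      calc 2 ^ (m + 1) = 2 * 2 ^ (m + 1 - 1) := by rw [Nat.succ_sub_one]; ring
        _ ≤ (m + 2) * Nat.factorial (m + 1) := by
            exact Nat.mul_le_mul (by omega) ih

/-- For every real `δ > 0` and integer `j ≥ 1`,
`min δ 1 ≤ ∑_{ℓ=1}^j δ^ℓ/ℓ! < 2 * max δ δ^j`. -/
theorem sum_pow_div_factorial_bounds (δ : ℝ) (hδ : 0 < δ) (j : ℕ) (hj : 1 ≤ j) :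
    min δ 1 ≤ ∑ ℓ ∈ Finset.Icc 1 j, δ ^ ℓ / (Nat.factorial ℓ : ℝ) ∧
    ∑ ℓ ∈ Finset.Icc 1 j, δ ^ ℓ / (Nat.factorial ℓ : ℝ) < 2 * max δ (δ ^ j) := by
  set M := max δ (δ ^ j) with hMdef
  have hM : 0 < M := lt_max_of_lt_left hδ
  constructor
  · -- lower bound
    have h1 : δ ≤ ∑ ℓ ∈ Finset.Icc 1 j, δ ^ ℓ / (Nat.factorial ℓ : ℝ) := by
      have := Finset.single_le_sum (f := fun ℓ => δ ^ ℓ / (Nat.factorial ℓ : ℝ))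
        (fun i _ => by positivity) (Finset.mem_Icc.mpr ⟨le_refl 1, hj⟩)
      simpa [Nat.factorial] using this
    exact le_trans (min_le_left _ _) h1
  · -- upper bound
    have hterm : ∀ ℓ ∈ Finset.Icc 1 j,
        δ ^ ℓ / (Nat.factorial ℓ : ℝ) ≤ M * (1/2 : ℝ) ^ (ℓ - 1) := by
      intro ℓ hℓ
      obtain ⟨h1ℓ, hℓj⟩ := Finset.mem_Icc.mp hℓ
      have hpow : δ ^ ℓ ≤ M := by
        rcases le_total δ 1 with h | h
        · calc δ ^ ℓ ≤ δ ^ 1 := pow_le_pow_of_le_one hδ.le h h1ℓ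
            _ = δ := pow_one δ
            _ ≤ M := le_max_left _ _
        · calc δ ^ ℓ ≤ δ ^ j := pow_le_pow_right₀ h hℓj
            _ ≤ M := le_max_right _ _
      have hfac : (1 : ℝ) / (Nat.factorial ℓ : ℝ) ≤ (1/2 : ℝ) ^ (ℓ - 1) := by
        have h2 : (2 : ℝ) ^ (ℓ - 1) ≤ (Nat.factorial ℓ : ℝ) := by
          exact_mod_cast two_pow_pred_le_factorial ℓ
        rw [div_pow, one_pow, div_le_div_iff₀ (by positivity) (by positivity)]
        linarith
      calc δ ^ ℓ / (Nat.factorial ℓ : ℝ) = δ ^ ℓ * (1 / (Nat.factorial ℓ : ℝ)) := by ring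
        _ ≤ M * (1/2 : ℝ) ^ (ℓ - 1) := by
            apply mul_le_mul hpow hfac (by positivity) hM.le
    calc ∑ ℓ ∈ Finset.Icc 1 j, δ ^ ℓ / (Nat.factorial ℓ : ℝ)
        ≤ ∑ ℓ ∈ Finset.Icc 1 j, M * (1/2 : ℝ) ^ (ℓ - 1) := Finset.sum_le_sum hterm
      _ = M * ∑ ℓ ∈ Finset.Icc 1 j, (1/2 : ℝ) ^ (ℓ - 1) := by rw [Finset.mul_sum]
      _ < M * 2 := by
          have hgs : ∑ ℓ ∈ Finset.Icc 1 j, (1/2 : ℝ) ^ (ℓ - 1) < 2 := by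
            have hre : ∑ ℓ ∈ Finset.Icc 1 j, (1/2 : ℝ) ^ (ℓ - 1)
                = ∑ i ∈ Finset.range j, (1/2 : ℝ) ^ i := by
              apply Finset.sum_nbij' (fun ℓ => ℓ - 1) (fun i => i + 1) <;>
                simp (config := {contextual := true}) [Finset.mem_Icc, Finset.mem_range] <;>
                omega
            rw [hre, geom_sum_eq (by norm_num)]
            have : (0:ℝ) < (1/2 : ℝ) ^ j := by positivity
            rw [div_lt_iff_of_neg (by norm_num)]
            linarith
          exact (mul_lt_mul_iff_right₀ hM).mpr hgs
      _ = 2 * M := mul_comm _ _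
end

section
/- Let f : ℝ^n → ℝ be twice differentiable at x with ∇f(x) = 0, let δ > 0 and ε₂ > 0. Then φ_{f,2}^δ(x) ≤ ε₂·δ²/2 if and only if the Hessian ∇²f(x) satisfies ∇²f(x)[d,d] ≥ −ε₂‖d‖² for all d ∈ ℝ^n (equivalently, λ_min[∇²f(x)] ≥ −ε₂). -/
/-!
With `∇f(x) = 0` the Taylor decrement is the quadratic form `d ↦ -½ ∇²f(x)[d,d]`, so the
supremum is at most `ε₂δ²/2` iff `-½ ∇²f(x)[d,d] ≤ ε₂δ²/2` on the ball of radius `δ`. Both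
sides of this and of `∇²f(x)[d,d] ≥ -ε₂‖d‖²` scale by `t²` under `d ↦ t • d`, so it suffices
to compare them on the sphere `‖d‖ = δ`, where they coincide.
-/

namespace ContinuousLinearMap

variable {E : Type*} [NormedAddCommGroup E] [NormedSpace ℝ E] (B : E →L[ℝ] E →L[ℝ] ℝ)

theorem apply_smul_smul (t : ℝ) (d : E) : B (t • d) (t • d) = t ^ 2 * B d d := by
  simp only [map_smul, smul_apply, smul_eq_mul]
  ring

theorem bddAbove_neg_half_apply_self (δ : ℝ) :
    BddAbove {y : ℝ | ∃ d : E, ‖d‖ ≤ δ ∧ y = -(1 / 2) * B d d} := by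
  refine ⟨(1 / 2) * ‖B‖ * δ ^ 2, ?_⟩
  rintro y ⟨d, hd, rfl⟩
  have hd2 : ‖d‖ ^ 2 ≤ δ ^ 2 := pow_le_pow_left₀ (norm_nonneg d) hd 2
  have hB : |B d d| ≤ ‖B‖ * ‖d‖ ^ 2 := by
    simpa only [Real.norm_eq_abs, mul_assoc, sq] using B.le_opNorm₂ d d
  nlinarith [neg_abs_le (B d d), mul_le_mul_of_nonneg_left hd2 B.opNorm_nonneg]

theorem sSup_neg_half_apply_self_le_iff {δ : ℝ} (hδ : 0 ≤ δ) (c : ℝ) :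
    sSup {y : ℝ | ∃ d : E, ‖d‖ ≤ δ ∧ y = -(1 / 2) * B d d} ≤ c ↔
      ∀ d : E, ‖d‖ ≤ δ → -(1 / 2) * B d d ≤ c := by
  have hne : {y : ℝ | ∃ d : E, ‖d‖ ≤ δ ∧ y = -(1 / 2) * B d d}.Nonempty :=
    ⟨_, 0, by simpa using hδ, rfl⟩
  rw [csSup_le_iff (B.bddAbove_neg_half_apply_self δ) hne]
  constructor
  · exact fun h d hd ↦ h _ ⟨d, hd, rfl⟩
  · rintro h y ⟨d, hd, rfl⟩
    exact h d hd

theorem forall_norm_le_neg_half_apply_self_le_iff {δ ε : ℝ} (hδ : 0 < δ) (hε : 0 ≤ ε) :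
    (∀ d : E, ‖d‖ ≤ δ → -(1 / 2) * B d d ≤ ε * δ ^ 2 / 2) ↔
      ∀ d : E, -ε * ‖d‖ ^ 2 ≤ B d d := by
  constructor
  · intro h d
    rcases eq_or_ne d 0 with rfl | hd
    · simp
    have hdpos : 0 < ‖d‖ := norm_pos_iff.mpr hd
    set t := δ / ‖d‖
    have ht : 0 < t := div_pos hδ hdpos
    have htd : t * ‖d‖ = δ := div_mul_cancel₀ δ hdpos.ne'
    have hle := h (t • d) (by rw [norm_smul, Real.norm_of_nonneg ht.le, htd])
    rw [apply_smul_smul, ← htd] at hle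
    have ht2 : 0 < t ^ 2 := by positivity
    nlinarith
  · intro h d hd
    have hd2 : ‖d‖ ^ 2 ≤ δ ^ 2 := pow_le_pow_left₀ (norm_nonneg d) hd 2
    nlinarith [h d, mul_le_mul_of_nonneg_left hd2 hε]

end ContinuousLinearMap

theorem phi_two_le_iff_hessian_almost_psd_general
    (n : ℕ) (f : EuclideanSpace ℝ (Fin n) → ℝ) (x : EuclideanSpace ℝ (Fin n))
    (hgrad : gradient f x = 0) (δ : ℝ) (hδ : 0 < δ) (ε₂ : ℝ) (hε₂ : 0 < ε₂) :
    sSup {y : ℝ | ∃ d : EuclideanSpace ℝ (Fin n), ‖d‖ ≤ δ ∧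
        y = -(inner ℝ (gradient f x) d : ℝ) - (1 / 2) * fderiv ℝ (fderiv ℝ f) x d d}
      ≤ ε₂ * δ ^ 2 / 2 ↔
    ∀ d : EuclideanSpace ℝ (Fin n), fderiv ℝ (fderiv ℝ f) x d d ≥ -ε₂ * ‖d‖ ^ 2 := by
  set B := fderiv ℝ (fderiv ℝ f) x
  have hdecrement : ∀ d, -(inner ℝ (gradient f x) d : ℝ) - (1 / 2) * B d d = -(1 / 2) * B d d :=
    fun d ↦ by rw [hgrad, inner_zero_left]; ring
  simp only [hdecrement]
  rw [B.sSup_neg_half_apply_self_le_iff hδ.le]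
  exact B.forall_norm_le_neg_half_apply_self_le_iff hδ hε₂.le

/-- For `f : ℝⁿ → ℝ` twice differentiable at `x` with `∇f(x) = 0`, `δ > 0` and
`ε₂ > 0`: the second-order optimality measure
`φ_{f,2}^δ(x) = sup_{‖d‖ ≤ δ} (−⟪∇f(x), d⟫ − ½∇²f(x)[d,d])` satisfies
`φ_{f,2}^δ(x) ≤ ε₂·δ²/2` iff `∇²f(x)[d,d] ≥ −ε₂‖d‖²` for all `d`. -/
theorem phi_two_le_iff_hessian_almost_psd
    (n : ℕ) (f : EuclideanSpace ℝ (Fin n) → ℝ) (x : EuclideanSpace ℝ (Fin n))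
    (hf1 : DifferentiableAt ℝ f x) (hf2 : DifferentiableAt ℝ (fderiv ℝ f) x)
    (hgrad : gradient f x = 0) (δ : ℝ) (hδ : 0 < δ) (ε₂ : ℝ) (hε₂ : 0 < ε₂) :
    sSup {y : ℝ | ∃ d : EuclideanSpace ℝ (Fin n), ‖d‖ ≤ δ ∧
        y = -(inner ℝ (gradient f x) d : ℝ) - (1 / 2) * fderiv ℝ (fderiv ℝ f) x d d}
      ≤ ε₂ * δ ^ 2 / 2 ↔
    ∀ d : EuclideanSpace ℝ (Fin n), fderiv ℝ (fderiv ℝ f) x d d ≥ -ε₂ * ‖d‖ ^ 2 :=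
  phi_two_le_iff_hessian_almost_psd_general n f x hgrad δ hδ ε₂ hε₂
end

section
/- Let ω ∈ (0,1), ξ > 0, ζ ≥ 0, and let v with ‖v‖ ≤ δ satisfy ΔT̄(v) ≥ 0. Suppose |ΔT̄(w) − ΔT(w)| ≤ ζ·Σ_{ℓ=1}^{j} δ^ℓ/ℓ! for all ‖w‖ ≤ δ. If it is NOT the case that (ΔT̄(v) > 0 and ζ·Σ_{ℓ=1}^{j} δ^ℓ/ℓ! ≤ ω·ΔT̄(v)), while ζ·Σ_{ℓ=1}^{j} δ^ℓ/ℓ! ≤ ω·ξ·δ^j/j!, then max( ΔT̄(v), |ΔT̄(w) − ΔT(w)| ) ≤ ξ·δ^j/j! for all w with ‖w‖ ≤ δ. -/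
noncomputable section

variable {E : Type*} [NormedAddCommGroup E] [InnerProductSpace ℝ E]

/-- A continuous `ℓ`-multilinear form is symmetric if its value is invariant
under any permutation of its arguments. -/
def SymmForm {E : Type*} [NormedAddCommGroup E] [InnerProductSpace ℝ E] (ℓ : ℕ)
    (B : ContinuousMultilinearMap ℝ (fun _ : Fin ℓ => E) ℝ) : Prop :=
  ∀ (σ : Equiv.Perm (Fin ℓ)) (v : Fin ℓ → E), B (fun i => v (σ i)) = B v

/-- The (possibly inexact) Taylor decrement `ΔT(w) = −∑_{ℓ=1}^j (1/ℓ!) B_ℓ[w]^ℓ`. -/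
def dT {E : Type*} [NormedAddCommGroup E] [InnerProductSpace ℝ E] (j : ℕ)
    (B : (ℓ : ℕ) → ContinuousMultilinearMap ℝ (fun _ : Fin ℓ => E) ℝ) (w : E) : ℝ :=
  -∑ ℓ ∈ Finset.Icc 1 j, (1 / (Nat.factorial ℓ : ℝ)) * B ℓ (fun _ => w)

/-- The optimality measure `φ = sup_{‖w‖ ≤ δ} ΔT(w)`. -/
def phiOpt {E : Type*} [NormedAddCommGroup E] [InnerProductSpace ℝ E] (j : ℕ)
    (B : (ℓ : ℕ) → ContinuousMultilinearMap ℝ (fun _ : Fin ℓ => E) ℝ) (δ : ℝ) : ℝ :=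
  sSup {y : ℝ | ∃ w : E, ‖w‖ ≤ δ ∧ y = dT j B w}

/-- Lemma 2.1 (ii) — the 'absolute' outcome of the CHECK algorithm: if the
relative test fails while the absolute test `ζ·∑ δ^ℓ/ℓ! ≤ ω·ξ·δ^j/j!` holds,
then `max(ΔT̄(v), |ΔT̄(w) − ΔT(w)|) ≤ ξ·δ^j/j!` for all `‖w‖ ≤ δ`. -/
theorem check_absolute_outcome (j : ℕ) (hj : 1 ≤ j) (δ : ℝ) (hδ : 0 < δ)
    (A B : (ℓ : ℕ) → ContinuousMultilinearMap ℝ (fun _ : Fin ℓ => E) ℝ)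
    (hsymA : ∀ ℓ ∈ Finset.Icc 1 j, SymmForm ℓ (A ℓ))
    (hsymB : ∀ ℓ ∈ Finset.Icc 1 j, SymmForm ℓ (B ℓ))
    (ω : ℝ) (hω : ω ∈ Set.Ioo (0 : ℝ) 1) (ξ : ℝ) (hξ : 0 < ξ) (ζ : ℝ) (hζ : 0 ≤ ζ)
    (v : E) (hv : ‖v‖ ≤ δ) (hv0 : 0 ≤ dT j B v)
    (herr : ∀ w : E, ‖w‖ ≤ δ →
      |dT j B w - dT j A w| ≤ ζ * ∑ ℓ ∈ Finset.Icc 1 j, δ ^ ℓ / (Nat.factorial ℓ : ℝ))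
    (hnotrel : ¬ (0 < dT j B v ∧
      ζ * ∑ ℓ ∈ Finset.Icc 1 j, δ ^ ℓ / (Nat.factorial ℓ : ℝ) ≤ ω * dT j B v))
    (habs : ζ * ∑ ℓ ∈ Finset.Icc 1 j, δ ^ ℓ / (Nat.factorial ℓ : ℝ)
      ≤ ω * ξ * δ ^ j / (Nat.factorial j : ℝ)) :
    ∀ w : E, ‖w‖ ≤ δ →
      max (dT j B v) |dT j B w - dT j A w| ≤ ξ * δ ^ j / (Nat.factorial j : ℝ) := by
  intro w hw
  have hS : 0 < ξ * δ ^ j / (Nat.factorial j : ℝ) := by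
    apply div_pos (mul_pos hξ (pow_pos hδ j))
    exact_mod_cast Nat.factorial_pos j
  have hω0 := hω.1
  have hω1 := hω.2
  have habs' : ζ * ∑ ℓ ∈ Finset.Icc 1 j, δ ^ ℓ / (Nat.factorial ℓ : ℝ)
      ≤ ξ * δ ^ j / (Nat.factorial j : ℝ) := by
    calc ζ * ∑ ℓ ∈ Finset.Icc 1 j, δ ^ ℓ / (Nat.factorial ℓ : ℝ)
        ≤ ω * ξ * δ ^ j / (Nat.factorial j : ℝ) := habs
      _ ≤ 1 * (ξ * δ ^ j / (Nat.factorial j : ℝ)) := by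
          rw [one_mul]
          have : ω * ξ * δ ^ j / (Nat.factorial j : ℝ)
              = ω * (ξ * δ ^ j / (Nat.factorial j : ℝ)) := by ring
          rw [this]
          nlinarith
      _ = ξ * δ ^ j / (Nat.factorial j : ℝ) := one_mul _
  have h2 : |dT j B w - dT j A w| ≤ ξ * δ ^ j / (Nat.factorial j : ℝ) :=
    le_trans (herr w hw) habs'
  have h1 : dT j B v ≤ ξ * δ ^ j / (Nat.factorial j : ℝ) := by
    rcases eq_or_lt_of_le hv0 with h | h
    · linarith
    · have hgt : ω * dT j B v
          < ζ * ∑ ℓ ∈ Finset.Icc 1 j, δ ^ ℓ / (Nat.factorial ℓ : ℝ) := by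
        by_contra hcon
        push_neg at hcon
        exact hnotrel ⟨h, hcon⟩
      have : ω * dT j B v < ω * (ξ * δ ^ j / (Nat.factorial j : ℝ)) := by
        have heq : ω * ξ * δ ^ j / (Nat.factorial j : ℝ)
            = ω * (ξ * δ ^ j / (Nat.factorial j : ℝ)) := by ring
        linarith [habs, hgt]
      exact le_of_lt ((mul_lt_mul_iff_right₀ hω0).mp this)
  exact max_le h1 h2
end
end

section
/- Let ω ∈ (0,1), ς ∈ (0,1], and let d with ‖d‖ ≤ δ satisfy ΔT̄(d) > 0 and ς·φ̄ ≤ ΔT̄(d). If |ΔT̄(w) − ΔT(w)| ≤ ω·ΔT̄(d) for all w with ‖w‖ ≤ δ, then (1 − ω)·ΔT̄(d) ≤ φ ≤ ((1 + ω)/ς)·ΔT̄(d). -/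
noncomputable section

variable {E : Type*} [NormedAddCommGroup E] [InnerProductSpace ℝ E]

/-- The 'relative' case (2.19) of Lemma 2.2: if `d` with `‖d‖ ≤ δ` satisfies
`ΔT̄(d) > 0`, `ς·φ̄ ≤ ΔT̄(d)` and `|ΔT̄(w) − ΔT(w)| ≤ ω·ΔT̄(d)` for all
`‖w‖ ≤ δ`, then `(1 − ω)·ΔT̄(d) ≤ φ ≤ ((1 + ω)/ς)·ΔT̄(d)`. -/
theorem phi_sandwich_relative (j : ℕ) (hj : 1 ≤ j) (δ : ℝ) (hδ : 0 < δ)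
    (A B : (ℓ : ℕ) → ContinuousMultilinearMap ℝ (fun _ : Fin ℓ => E) ℝ)
    (hsymA : ∀ ℓ ∈ Finset.Icc 1 j, SymmForm ℓ (A ℓ))
    (hsymB : ∀ ℓ ∈ Finset.Icc 1 j, SymmForm ℓ (B ℓ))
    (ω : ℝ) (hω : ω ∈ Set.Ioo (0 : ℝ) 1) (ς : ℝ) (hς : ς ∈ Set.Ioc (0 : ℝ) 1)
    (d : E) (hd : ‖d‖ ≤ δ) (hd0 : 0 < dT j B d)
    (hφ : ς * phiOpt j B δ ≤ dT j B d)
    (herr : ∀ w : E, ‖w‖ ≤ δ → |dT j B w - dT j A w| ≤ ω * dT j B d) :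
    (1 - ω) * dT j B d ≤ phiOpt j A δ ∧
      phiOpt j A δ ≤ ((1 + ω) / ς) * dT j B d := by
  obtain ⟨hω0, hω1⟩ := hω
  obtain ⟨hς0, hς1⟩ := hς
  -- S_B is bounded above
  have hbddB : BddAbove {y : ℝ | ∃ w : E, ‖w‖ ≤ δ ∧ y = dT j B w} := by
    refine ⟨∑ ℓ ∈ Finset.Icc 1 j, (1 / (Nat.factorial ℓ : ℝ)) * ‖B ℓ‖ * δ ^ ℓ, ?_⟩
    rintro y ⟨w, hw, rfl⟩
    have h0w : 0 ≤ ‖w‖ := norm_nonneg w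
    calc dT j B w ≤ |dT j B w| := le_abs_self _
      _ = |∑ ℓ ∈ Finset.Icc 1 j, (1 / (Nat.factorial ℓ : ℝ)) * B ℓ (fun _ => w)| := by
          rw [dT, abs_neg]
      _ ≤ ∑ ℓ ∈ Finset.Icc 1 j, |(1 / (Nat.factorial ℓ : ℝ)) * B ℓ (fun _ => w)| :=
          Finset.abs_sum_le_sum_abs _ _
      _ ≤ ∑ ℓ ∈ Finset.Icc 1 j, (1 / (Nat.factorial ℓ : ℝ)) * ‖B ℓ‖ * δ ^ ℓ := by
          refine Finset.sum_le_sum fun ℓ _ => ?_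
          have h1 : |(B ℓ) fun _ => w| ≤ ‖B ℓ‖ * ‖w‖ ^ ℓ := by
            have := (B ℓ).le_opNorm (fun _ => w)
            simpa [Finset.prod_const] using this
          have h2 : |(1 / (Nat.factorial ℓ : ℝ)) * B ℓ (fun _ => w)|
              = (1 / (Nat.factorial ℓ : ℝ)) * |B ℓ (fun _ => w)| := by
            rw [abs_mul, abs_of_nonneg (by positivity)]
          rw [h2, mul_assoc]
          have hfac : (0:ℝ) ≤ 1 / (Nat.factorial ℓ : ℝ) := by positivity
          refine mul_le_mul_of_nonneg_left ?_ hfac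
          calc |(B ℓ) fun _ => w| ≤ ‖B ℓ‖ * ‖w‖ ^ ℓ := h1
            _ ≤ ‖B ℓ‖ * δ ^ ℓ := by
                refine mul_le_mul_of_nonneg_left ?_ (norm_nonneg _)
                exact pow_le_pow_left₀ h0w hw ℓ
  -- every element of S_B is ≤ phiOpt B
  have hmemB : ∀ w : E, ‖w‖ ≤ δ → dT j B w ≤ phiOpt j B δ := fun w hw =>
    le_csSup hbddB ⟨w, hw, rfl⟩
  have hφB : phiOpt j B δ ≤ dT j B d / ς := by
    rw [le_div_iff₀ hς0, mul_comm]
    exact hφ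
  -- bound on elements of S_A
  have hub : ∀ y ∈ {y : ℝ | ∃ w : E, ‖w‖ ≤ δ ∧ y = dT j A w},
      y ≤ ((1 + ω) / ς) * dT j B d := by
    rintro y ⟨w, hw, rfl⟩
    have h1 : dT j A w ≤ dT j B w + ω * dT j B d := by
      have := herr w hw
      have := abs_le.mp this
      linarith [this.1]
    have h2 : dT j B w ≤ dT j B d / ς := (hmemB w hw).trans hφB
    have h3 : ω * dT j B d ≤ ω * (dT j B d / ς) := by
      refine mul_le_mul_of_nonneg_left ?_ hω0.le
      rw [le_div_iff₀ hς0]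
      nlinarith
    have : dT j B d / ς + ω * (dT j B d / ς) = ((1 + ω) / ς) * dT j B d := by
      field_simp
    linarith
  have hbddA : BddAbove {y : ℝ | ∃ w : E, ‖w‖ ≤ δ ∧ y = dT j A w} :=
    ⟨((1 + ω) / ς) * dT j B d, hub⟩
  constructor
  · have h1 : (1 - ω) * dT j B d ≤ dT j A d := by
      have := abs_le.mp (herr d hd)
      nlinarith [this.2]
    exact h1.trans (le_csSup hbddA ⟨d, hd, rfl⟩)
  · exact csSup_le ⟨dT j A d, d, hd, rfl⟩ hub
end
end

section
/- Let ς ∈ (0,1], ε > 0, an integer j ≥ 1, and let d with ‖d‖ ≤ δ satisfy ς·φ̄ ≤ ΔT̄(d). If ΔT̄(d) ≤ (ς·ε/2)·δ^j/j! and |ΔT̄(w) − ΔT(w)| ≤ (ς·ε/2)·δ^j/j! for all w with ‖w‖ ≤ δ, then φ ≤ ε·δ^j/j!. -/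
noncomputable section

variable {E : Type*} [NormedAddCommGroup E] [InnerProductSpace ℝ E]

/-! The bound on `ΔT̄(d)` turns `ς·φ̄ ≤ ΔT̄(d)` into `φ̄ ≤ (ε/2)·δ^j/j!`, and the uniform error bound
`c = (ς·ε/2)·δ^j/j!` between the two decrements gives `φ ≤ φ̄ + c`; since `c ≤ c/ς`, the two halves
add up to `ε·δ^j/j!`. The one analytic input is that `φ̄` is a genuine supremum: each `B_ℓ` is bounded,
so `ΔT̄` is bounded above on the closed ball. -/

section Decrement

variable (j : ℕ) (B : (ℓ : ℕ) → ContinuousMultilinearMap ℝ (fun _ : Fin ℓ => E) ℝ)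

theorem dT_le_of_norm_le {δ : ℝ} {w : E} (hw : ‖w‖ ≤ δ) :
    dT j B w ≤ ∑ ℓ ∈ Finset.Icc 1 j, ‖B ℓ‖ * δ ^ ℓ / (Nat.factorial ℓ : ℝ) := by
  unfold dT
  rw [← Finset.sum_neg_distrib]
  refine Finset.sum_le_sum fun ℓ _ => ?_
  have hBw : ‖B ℓ (fun _ => w)‖ ≤ ‖B ℓ‖ * δ ^ ℓ :=
    (B ℓ).le_opNorm_mul_pow_of_le (pi_norm_const_le w |>.trans hw)
  have hneg : -B ℓ (fun _ => w) ≤ ‖B ℓ‖ * δ ^ ℓ := (neg_le_abs _).trans hBw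
  calc -(1 / (Nat.factorial ℓ : ℝ) * B ℓ (fun _ => w))
      = -B ℓ (fun _ => w) / (Nat.factorial ℓ : ℝ) := by ring
    _ ≤ ‖B ℓ‖ * δ ^ ℓ / (Nat.factorial ℓ : ℝ) := by gcongr

theorem bddAbove_dT_closedBall (δ : ℝ) :
    BddAbove {y : ℝ | ∃ w : E, ‖w‖ ≤ δ ∧ y = dT j B w} := by
  refine ⟨∑ ℓ ∈ Finset.Icc 1 j, ‖B ℓ‖ * δ ^ ℓ / (Nat.factorial ℓ : ℝ), ?_⟩
  rintro y ⟨w, hw, rfl⟩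
  exact dT_le_of_norm_le j B hw

theorem dT_le_phiOpt {δ : ℝ} {w : E} (hw : ‖w‖ ≤ δ) : dT j B w ≤ phiOpt j B δ :=
  le_csSup (bddAbove_dT_closedBall j B δ) ⟨w, hw, rfl⟩

theorem phiOpt_le_of_forall_dT_le {δ M : ℝ} (hδ : 0 ≤ δ) (h : ∀ w : E, ‖w‖ ≤ δ → dT j B w ≤ M) :
    phiOpt j B δ ≤ M := by
  refine csSup_le ⟨dT j B 0, 0, by simpa using hδ, rfl⟩ ?_
  rintro y ⟨w, hw, rfl⟩
  exact h w hw

theorem phiOpt_le_phiOpt_add (A : (ℓ : ℕ) → ContinuousMultilinearMap ℝ (fun _ : Fin ℓ => E) ℝ)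
    {δ c : ℝ} (hδ : 0 ≤ δ) (h : ∀ w : E, ‖w‖ ≤ δ → |dT j B w - dT j A w| ≤ c) :
    phiOpt j A δ ≤ phiOpt j B δ + c :=
  phiOpt_le_of_forall_dT_le j A hδ fun w hw => by
    linarith [dT_le_phiOpt j B hw, (abs_le.mp (h w hw)).1]

end Decrement

theorem phi_le_absolute_general (j : ℕ) (δ : ℝ)
    (A B : (ℓ : ℕ) → ContinuousMultilinearMap ℝ (fun _ : Fin ℓ => E) ℝ)
    (ς : ℝ) (hς : ς ∈ Set.Ioc (0 : ℝ) 1) (ε : ℝ)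
    (d : E) (hd : ‖d‖ ≤ δ) (hφ : ς * phiOpt j B δ ≤ dT j B d)
    (hdT : dT j B d ≤ (ς * ε / 2) * δ ^ j / (Nat.factorial j : ℝ))
    (herr : ∀ w : E, ‖w‖ ≤ δ →
      |dT j B w - dT j A w| ≤ (ς * ε / 2) * δ ^ j / (Nat.factorial j : ℝ)) :
    phiOpt j A δ ≤ ε * δ ^ j / (Nat.factorial j : ℝ) := by
  obtain ⟨hς0, hς1⟩ := hς
  set c := (ς * ε / 2) * δ ^ j / (Nat.factorial j : ℝ) with hc_def
  have hδ0 : 0 ≤ δ := (norm_nonneg d).trans hd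
  have hc : 0 ≤ c := (abs_nonneg _).trans (herr 0 (by simpa using hδ0))
  have hφB : ς * phiOpt j B δ ≤ c := hφ.trans hdT
  have hcς : c ≤ c / ς := le_div_self hc hς0 hς1
  have hsplit : ε * δ ^ j / (Nat.factorial j : ℝ) = c / ς + c / ς := by
    rw [hc_def]
    field_simp
    ring
  calc phiOpt j A δ ≤ phiOpt j B δ + c := phiOpt_le_phiOpt_add j B A hδ0 herr
    _ ≤ c / ς + c / ς := add_le_add ((le_div_iff₀' hς0).mpr hφB) hcς
    _ = ε * δ ^ j / (Nat.factorial j : ℝ) := hsplit.symm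

/-- The 'absolute' case (2.18) of Lemma 2.2: if `d` with `‖d‖ ≤ δ` satisfies
`ς·φ̄ ≤ ΔT̄(d)`, `ΔT̄(d) ≤ (ς·ε/2)·δ^j/j!` and
`|ΔT̄(w) − ΔT(w)| ≤ (ς·ε/2)·δ^j/j!` for all `‖w‖ ≤ δ`, then `φ ≤ ε·δ^j/j!`. -/
theorem phi_le_absolute (j : ℕ) (hj : 1 ≤ j) (δ : ℝ) (hδ : 0 < δ)
    (A B : (ℓ : ℕ) → ContinuousMultilinearMap ℝ (fun _ : Fin ℓ => E) ℝ)
    (hsymA : ∀ ℓ ∈ Finset.Icc 1 j, SymmForm ℓ (A ℓ))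
    (hsymB : ∀ ℓ ∈ Finset.Icc 1 j, SymmForm ℓ (B ℓ))
    (ς : ℝ) (hς : ς ∈ Set.Ioc (0 : ℝ) 1) (ε : ℝ) (hε : 0 < ε)
    (d : E) (hd : ‖d‖ ≤ δ) (hφ : ς * phiOpt j B δ ≤ dT j B d)
    (hdT : dT j B d ≤ (ς * ε / 2) * δ ^ j / (Nat.factorial j : ℝ))
    (herr : ∀ w : E, ‖w‖ ≤ δ →
      |dT j B w - dT j A w| ≤ (ς * ε / 2) * δ ^ j / (Nat.factorial j : ℝ)) :
    phiOpt j A δ ≤ ε * δ ^ j / (Nat.factorial j : ℝ) :=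
  phi_le_absolute_general j δ A B ς hς ε d hd hφ hdT herr
end
end

section
/- Let (Δ_i)_{i≥0} be a sequence of positive reals, S ⊆ ℕ, and constants γ₂ ∈ (0,1), γ₃ > 1 such that for every i: Δ_{i+1} ≤ γ₃·Δ_i if i ∈ S, and Δ_{i+1} ≤ γ₂·Δ_i if i ∉ S. Suppose Δ_k ≥ Δ_min for some Δ_min ∈ (0, Δ_0]. Then k ≤ |S ∩ {0,…,k−1}|·(1 + log γ₃/|log γ₂|) + (1/|log γ₂|)·|log(Δ_min/Δ_0)|. -/
/-- Lemma 3.4 (trust-region counting lemma): if the radius increases by at most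
the factor `γ₃ > 1` on successful iterations (those in `S`) and decreases by at
least the factor `γ₂ < 1` on unsuccessful ones, and `Δ_k ≥ Δmin` with
`Δmin ∈ (0, Δ_0]`, then
`k ≤ |S ∩ {0,…,k−1}|·(1 + log γ₃/|log γ₂|) + (1/|log γ₂|)·|log(Δmin/Δ_0)|`. -/
theorem trust_region_iteration_count
    (Δ : ℕ → ℝ) (hΔpos : ∀ i, 0 < Δ i) (S : Set ℕ)
    (γ₂ γ₃ : ℝ) (hγ₂ : γ₂ ∈ Set.Ioo (0 : ℝ) 1) (hγ₃ : 1 < γ₃)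
    (hstep : ∀ i, (i ∈ S → Δ (i + 1) ≤ γ₃ * Δ i) ∧ (i ∉ S → Δ (i + 1) ≤ γ₂ * Δ i))
    (k : ℕ) (Δmin : ℝ) (hΔmin : Δmin ∈ Set.Ioc 0 (Δ 0)) (hk : Δ k ≥ Δmin) :
    (k : ℝ) ≤ ((S ∩ {i | i < k}).ncard : ℝ) * (1 + Real.log γ₃ / |Real.log γ₂|)
      + (1 / |Real.log γ₂|) * |Real.log (Δmin / Δ 0)| := by
  obtain ⟨hγ₂0, hγ₂1⟩ := hγ₂
  obtain ⟨hΔm0, hΔmle⟩ := hΔmin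
  have hγ₃0 : (0:ℝ) < γ₃ := lt_trans one_pos hγ₃
  have hfin : ∀ n : ℕ, (S ∩ {i | i < n}).Finite := fun n =>
    (Set.finite_Iio n).subset Set.inter_subset_right
  have hcard : ∀ n : ℕ, (S ∩ {i | i < n}).ncard ≤ n := by
    intro n
    have := Set.ncard_le_ncard (s := S ∩ {i | i < n}) (t := Set.Iio n)
      Set.inter_subset_right (Set.finite_Iio n)
    have hIio : (Set.Iio n).ncard = n := by
      rw [Set.ncard_eq_toFinset_card']; simp
    exact le_trans this (le_of_eq hIio)
  have key : ∀ n : ℕ, Δ n ≤ γ₃ ^ (S ∩ {i | i < n}).ncard *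
      γ₂ ^ (n - (S ∩ {i | i < n}).ncard) * Δ 0 := by
    intro n
    induction n with
    | zero => simp
    | succ n ih =>
      have hs := hcard n
      by_cases hmem : n ∈ S
      · have hset : S ∩ {i | i < n + 1} = insert n (S ∩ {i | i < n}) := by
          ext x
          simp only [Set.mem_inter_iff, Set.mem_setOf_eq, Set.mem_insert_iff,
            Nat.lt_succ_iff_lt_or_eq]
          constructor
          · rintro ⟨hx, hlt | rfl⟩
            · exact Or.inr ⟨hx, hlt⟩
            · exact Or.inl rfl
          · rintro (rfl | ⟨hx, hlt⟩)
            · exact ⟨hmem, Or.inr rfl⟩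
            · exact ⟨hx, Or.inl hlt⟩
        have hnot : n ∉ S ∩ {i | i < n} := by simp
        have hnc : (S ∩ {i | i < n + 1}).ncard = (S ∩ {i | i < n}).ncard + 1 := by
          rw [hset, Set.ncard_insert_of_notMem hnot (hfin n)]
        rw [hnc]
        have hsub : n + 1 - ((S ∩ {i | i < n}).ncard + 1) = n - (S ∩ {i | i < n}).ncard := by
          omega
        rw [hsub]
        calc Δ (n + 1) ≤ γ₃ * Δ n := (hstep n).1 hmem
          _ ≤ γ₃ * (γ₃ ^ (S ∩ {i | i < n}).ncard * γ₂ ^ (n - (S ∩ {i | i < n}).ncard) * Δ 0) :=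
              by exact mul_le_mul_of_nonneg_left ih (le_of_lt hγ₃0)
          _ = γ₃ ^ ((S ∩ {i | i < n}).ncard + 1) * γ₂ ^ (n - (S ∩ {i | i < n}).ncard) * Δ 0 := by
              ring
      · have hset : S ∩ {i | i < n + 1} = S ∩ {i | i < n} := by
          ext x
          simp only [Set.mem_inter_iff, Set.mem_setOf_eq, Nat.lt_succ_iff_lt_or_eq]
          constructor
          · rintro ⟨hx, hlt | rfl⟩
            · exact ⟨hx, hlt⟩
            · exact absurd hx hmem
          · rintro ⟨hx, hlt⟩
            exact ⟨hx, Or.inl hlt⟩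
        rw [hset]
        have hsub : n + 1 - (S ∩ {i | i < n}).ncard = (n - (S ∩ {i | i < n}).ncard) + 1 := by
          omega
        rw [hsub]
        calc Δ (n + 1) ≤ γ₂ * Δ n := (hstep n).2 hmem
          _ ≤ γ₂ * (γ₃ ^ (S ∩ {i | i < n}).ncard * γ₂ ^ (n - (S ∩ {i | i < n}).ncard) * Δ 0) :=
              mul_le_mul_of_nonneg_left ih (le_of_lt hγ₂0)
          _ = γ₃ ^ (S ∩ {i | i < n}).ncard * γ₂ ^ ((n - (S ∩ {i | i < n}).ncard) + 1) * Δ 0 := by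
              ring
  set s := (S ∩ {i | i < k}).ncard with hsdef
  have hs : s ≤ k := hcard k
  have hΔ0 : 0 < Δ 0 := hΔpos 0
  have hlog : Real.log Δmin ≤ (s : ℝ) * Real.log γ₃ + ((k - s : ℕ) : ℝ) * Real.log γ₂
      + Real.log (Δ 0) := by
    have h1 : Δmin ≤ γ₃ ^ s * γ₂ ^ (k - s) * Δ 0 := le_trans hk (key k)
    have h2 := Real.log_le_log hΔm0 h1
    rw [Real.log_mul (by positivity) (ne_of_gt hΔ0),
      Real.log_mul (by positivity) (by positivity),
      Real.log_pow, Real.log_pow] at h2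
    push_cast at h2 ⊢
    linarith
  have hlogγ₂ : Real.log γ₂ < 0 := Real.log_neg hγ₂0 hγ₂1
  have hlogγ₃ : 0 < Real.log γ₃ := Real.log_pos hγ₃
  rw [abs_of_neg hlogγ₂, abs_of_nonpos (Real.log_nonpos (by positivity)
    (by rw [div_le_one hΔ0]; exact hΔmle))]
  rw [Real.log_div (ne_of_gt hΔm0) (ne_of_gt hΔ0)]
  have hL : (0:ℝ) < -Real.log γ₂ := by linarith
  have hu : ((k - s : ℕ) : ℝ) = (k : ℝ) - (s : ℝ) := by
    push_cast [Nat.cast_sub hs]; ring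
  have h3 : ((k : ℝ) - s) * (-Real.log γ₂) ≤ (s : ℝ) * Real.log γ₃
      + (Real.log (Δ 0) - Real.log Δmin) := by
    rw [hu] at hlog; nlinarith
  have h4 : (k : ℝ) - s ≤ ((s : ℝ) * Real.log γ₃ + (Real.log (Δ 0) - Real.log Δmin))
      / (-Real.log γ₂) := (le_div_iff₀ hL).2 h3
  have heq : (s : ℝ) * (1 + Real.log γ₃ / -Real.log γ₂)
      + 1 / -Real.log γ₂ * -(Real.log Δmin - Real.log (Δ 0))
      = (s : ℝ) + ((s : ℝ) * Real.log γ₃ + (Real.log (Δ 0) - Real.log Δmin)) / (-Real.log γ₂) := by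
    have hne : Real.log γ₂ ≠ 0 := ne_of_lt hlogγ₂
    field_simp
    ring
  rw [heq]
  linarith
end

section
/- Let ω ∈ (0,1), ς ∈ (0,1], ζ > 0, and let d with ‖d‖ ≤ δ satisfy ς·φ̄ ≤ ΔT̄(d). Suppose |ΔT̄(w) − ΔT(w)| ≤ ζ·Σ_{ℓ=1}^{j} δ^ℓ/ℓ! for all ‖w‖ ≤ δ, and that the relative-accuracy test fails: ω·ΔT̄(d) < ζ·Σ_{ℓ=1}^{j} δ^ℓ/ℓ!. Then φ ≤ (2/(ω·ς))·ζ·Σ_{ℓ=1}^{j} δ^ℓ/ℓ!. -/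
noncomputable section

variable {E : Type*} [NormedAddCommGroup E] [InnerProductSpace ℝ E]

/-- Inequality (3.7) in the proof of Lemma 3.3: if the relative-accuracy test
fails, i.e. `ω·ΔT̄(d) < ζ·∑ δ^ℓ/ℓ!`, while `ς·φ̄ ≤ ΔT̄(d)` and the error bound
`|ΔT̄(w) − ΔT(w)| ≤ ζ·∑ δ^ℓ/ℓ!` holds for all `‖w‖ ≤ δ`, then
`φ ≤ (2/(ω·ς))·ζ·∑_{ℓ=1}^j δ^ℓ/ℓ!`. -/
theorem phi_bound_when_relative_test_fails (j : ℕ) (hj : 1 ≤ j) (δ : ℝ) (hδ : 0 < δ)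
    (A B : (ℓ : ℕ) → ContinuousMultilinearMap ℝ (fun _ : Fin ℓ => E) ℝ)
    (hsymA : ∀ ℓ ∈ Finset.Icc 1 j, SymmForm ℓ (A ℓ))
    (hsymB : ∀ ℓ ∈ Finset.Icc 1 j, SymmForm ℓ (B ℓ))
    (ω : ℝ) (hω : ω ∈ Set.Ioo (0 : ℝ) 1) (ς : ℝ) (hς : ς ∈ Set.Ioc (0 : ℝ) 1)
    (ζ : ℝ) (hζ : 0 < ζ)
    (d : E) (hd : ‖d‖ ≤ δ) (hφ : ς * phiOpt j B δ ≤ dT j B d)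
    (herr : ∀ w : E, ‖w‖ ≤ δ →
      |dT j B w - dT j A w| ≤ ζ * ∑ ℓ ∈ Finset.Icc 1 j, δ ^ ℓ / (Nat.factorial ℓ : ℝ))
    (hfail : ω * dT j B d < ζ * ∑ ℓ ∈ Finset.Icc 1 j, δ ^ ℓ / (Nat.factorial ℓ : ℝ)) :
    phiOpt j A δ ≤ (2 / (ω * ς)) * ζ * ∑ ℓ ∈ Finset.Icc 1 j, δ ^ ℓ / (Nat.factorial ℓ : ℝ) := by
  set S : ℝ := ζ * ∑ ℓ ∈ Finset.Icc 1 j, δ ^ ℓ / (Nat.factorial ℓ : ℝ) with hSdef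
  obtain ⟨hω0, hω1⟩ := hω
  obtain ⟨hς0, hς1⟩ := hς
  have hne : (Finset.Icc 1 j).Nonempty := ⟨1, by simp [hj]⟩
  have hS : 0 < S := by
    apply mul_pos hζ
    apply Finset.sum_pos _ hne
    intro i hi
    positivity
  -- bounded above
  have hbdd : BddAbove {y : ℝ | ∃ w : E, ‖w‖ ≤ δ ∧ y = dT j B w} := by
    refine ⟨∑ ℓ ∈ Finset.Icc 1 j, (1 / (Nat.factorial ℓ : ℝ)) * (‖B ℓ‖ * δ ^ ℓ), ?_⟩
    rintro y ⟨w, hw, rfl⟩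
    have : dT j B w ≤ ∑ ℓ ∈ Finset.Icc 1 j, (1 / (Nat.factorial ℓ : ℝ)) * (‖B ℓ‖ * δ ^ ℓ) := by
      rw [dT, neg_le]
      rw [← Finset.sum_neg_distrib]
      apply Finset.sum_le_sum
      intro i hi
      have h1 : |B i (fun _ => w)| ≤ ‖B i‖ * δ ^ i := by
        calc |B i (fun _ => w)| ≤ ‖B i‖ * ∏ _k : Fin i, ‖w‖ :=
              (B i).le_opNorm _
          _ = ‖B i‖ * ‖w‖ ^ i := by rw [Finset.prod_const, Finset.card_univ, Fintype.card_fin]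
          _ ≤ ‖B i‖ * δ ^ i := by gcongr
      have hfac : (0:ℝ) ≤ 1 / (Nat.factorial i : ℝ) := by positivity
      nlinarith [(abs_le.mp h1).1, hfac]
    exact this
  -- φ̄_B bound from below each element
  have hmem : ∀ w : E, ‖w‖ ≤ δ → dT j B w ≤ phiOpt j B δ := by
    intro w hw
    exact le_csSup hbdd ⟨w, hw, rfl⟩
  have hφB : phiOpt j B δ ≤ S / (ω * ς) := by
    have h1 : dT j B d < S / ω := by
      rw [lt_div_iff₀ hω0]; linarith [hfail]
    have h2 : ς * phiOpt j B δ < S / ω := lt_of_le_of_lt hφ h1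
    rw [le_div_iff₀ (mul_pos hω0 hς0)]
    have hωS : ω * (S / ω) = S := by field_simp
    nlinarith [h2, hω0, hωS]
  -- main
  rw [phiOpt]
  have hgoal : (2 / (ω * ς)) * ζ * ∑ ℓ ∈ Finset.Icc 1 j, δ ^ ℓ / (Nat.factorial ℓ : ℝ)
      = 2 * (S / (ω * ς)) := by
    rw [hSdef]; field_simp
  rw [hgoal]
  apply Real.sSup_le
  · rintro y ⟨w, hw, rfl⟩
    have herr' := herr w hw
    have h1 : dT j A w ≤ dT j B w + S := by
      have := (abs_le.mp herr').1
      linarith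
    have h2 : dT j B w ≤ S / (ω * ς) := (hmem w hw).trans hφB
    have hws : ω * ς ≤ 1 := by nlinarith
    have h3 : S ≤ S / (ω * ς) := by
      rw [le_div_iff₀ (mul_pos hω0 hς0)]
      nlinarith
    linarith
  · positivity
end
end

section
/- Let ω ∈ (0,1), ς ∈ (0,1], γ_ζ ∈ (0,1), ϑ_d > 0, ν > 0 and an integer j ≥ 1. Let d with ‖d‖ ≤ ν satisfy ς·φ̄ ≤ ΔT̄(d), suppose |ΔT̄(w) − ΔT(w)| ≤ ζ·Σ_{ℓ=1}^{j} ν^ℓ/ℓ! for all ‖w‖ ≤ ν, that ω·ΔT̄(d) < ζ·Σ_{ℓ=1}^{j} ν^ℓ/ℓ!, and that ζ > 0 satisfies γ_ζ·ζ ≤ ϑ_d. Then φ ≤ (4·ϑ_d/(γ_ζ·ω·ς))·max(ν, ν^j). -/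
lemma my_two_pow_le_factorial (m : ℕ) : 2 ^ m ≤ (m + 1).factorial := by
  induction m with
  | zero => simp
  | succ k ih =>
    calc 2 ^ (k + 1) = 2 * 2 ^ k := by ring
    _ ≤ (k + 2) * (k + 1).factorial := Nat.mul_le_mul (by omega) ih
    _ = (k + 2).factorial := (Nat.factorial_succ _).symm

lemma my_sum_bound (j : ℕ) (ν : ℝ) (hν : 0 < ν) :
    ∑ ℓ ∈ Finset.Icc 1 j, ν ^ ℓ / (Nat.factorial ℓ : ℝ) ≤ 2 * max ν (ν ^ j) := by
  have hM : 0 ≤ max ν (ν ^ j) := le_max_of_le_left hν.le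
  calc ∑ ℓ ∈ Finset.Icc 1 j, ν ^ ℓ / (Nat.factorial ℓ : ℝ)
      ≤ ∑ ℓ ∈ Finset.Icc 1 j, max ν (ν ^ j) * (1 / 2 : ℝ) ^ (ℓ - 1) := by
        apply Finset.sum_le_sum
        intro ℓ hℓ
        obtain ⟨h1, h2⟩ := Finset.mem_Icc.1 hℓ
        have hpow : ν ^ ℓ ≤ max ν (ν ^ j) := by
          rcases le_or_gt ν 1 with h | h
          · exact le_max_of_le_left (by
              calc ν ^ ℓ ≤ ν ^ 1 := pow_le_pow_of_le_one hν.le h h1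
              _ = ν := pow_one ν)
          · exact le_max_of_le_right (pow_le_pow_right₀ h.le h2)
        have hfac : (1 / 2 : ℝ) ^ (ℓ - 1) = ((2 : ℝ) ^ (ℓ - 1))⁻¹ := by
          rw [one_div, inv_pow]
        have h2f : (2 : ℝ) ^ (ℓ - 1) ≤ (Nat.factorial ℓ : ℝ) := by
          have := my_two_pow_le_factorial (ℓ - 1)
          rw [Nat.sub_add_cancel h1] at this
          exact_mod_cast this
        have hfpos : (0 : ℝ) < (2 : ℝ) ^ (ℓ - 1) := by positivity
        rw [div_eq_mul_inv, hfac]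
        exact mul_le_mul hpow (inv_anti₀ hfpos h2f) (by positivity) hM
    _ = max ν (ν ^ j) * ∑ ℓ ∈ Finset.Icc 1 j, (1 / 2 : ℝ) ^ (ℓ - 1) := by
        rw [Finset.mul_sum]
    _ ≤ max ν (ν ^ j) * 2 := by
        apply mul_le_mul_of_nonneg_left _ hM
        rw [← Finset.Ico_add_one_right_eq_Icc, Finset.sum_Ico_eq_sum_range]
        simp only [Nat.add_sub_cancel_left, Nat.succ_sub_one, Nat.add_sub_cancel]
        exact sum_geometric_two_le j
    _ = 2 * max ν (ν ^ j) := mul_comm _ _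

noncomputable section

variable {E : Type*} [NormedAddCommGroup E] [InnerProductSpace ℝ E]

lemma dT_bddAbove (j : ℕ) (ν : ℝ) (hν : 0 ≤ ν)
    (B : (ℓ : ℕ) → ContinuousMultilinearMap ℝ (fun _ : Fin ℓ => E) ℝ) :
    BddAbove {y : ℝ | ∃ w : E, ‖w‖ ≤ ν ∧ y = dT j B w} := by
  refine ⟨∑ ℓ ∈ Finset.Icc 1 j, (1 / (Nat.factorial ℓ : ℝ)) * (‖B ℓ‖ * ν ^ ℓ), ?_⟩
  rintro y ⟨w, hw, rfl⟩
  rw [dT]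
  refine le_trans (neg_le_abs _) ?_
  refine le_trans (Finset.abs_sum_le_sum_abs _ _) (Finset.sum_le_sum fun ℓ _ => ?_)
  rw [abs_mul]
  have h1 : |(1 / (Nat.factorial ℓ : ℝ))| = 1 / (Nat.factorial ℓ : ℝ) := by
    rw [abs_of_nonneg]; positivity
  rw [h1]
  have hb : |B ℓ (fun _ => w)| ≤ ‖B ℓ‖ * ν ^ ℓ := by
    have h := (B ℓ).le_opNorm (fun _ => w)
    rw [Real.norm_eq_abs] at h
    calc |B ℓ (fun _ => w)| ≤ ‖B ℓ‖ * ∏ _i : Fin ℓ, ‖w‖ := h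
      _ = ‖B ℓ‖ * ‖w‖ ^ ℓ := by
          rw [Finset.prod_const, Finset.card_univ, Fintype.card_fin]
      _ ≤ ‖B ℓ‖ * ν ^ ℓ := by
          gcongr
  exact mul_le_mul_of_nonneg_left hb (by positivity)

/-- Lemma 3.5 (termination in the step computation because of derivative
noise): if `ς·φ̄ ≤ ΔT̄(d)` for some `‖d‖ ≤ ν`, the error bound
`|ΔT̄(w) − ΔT(w)| ≤ ζ·∑ ν^ℓ/ℓ!` holds for all `‖w‖ ≤ ν`, the relative test
fails (`ω·ΔT̄(d) < ζ·∑ ν^ℓ/ℓ!`), and the threshold cannot be tightened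
(`γ_ζ·ζ ≤ ϑ_d`), then `φ ≤ (4·ϑ_d/(γ_ζ·ω·ς))·max(ν, ν^j)`. -/
theorem phi_bound_at_noise_termination (j : ℕ) (hj : 1 ≤ j) (ν : ℝ) (hν : 0 < ν)
    (A B : (ℓ : ℕ) → ContinuousMultilinearMap ℝ (fun _ : Fin ℓ => E) ℝ)
    (hsymA : ∀ ℓ ∈ Finset.Icc 1 j, SymmForm ℓ (A ℓ))
    (hsymB : ∀ ℓ ∈ Finset.Icc 1 j, SymmForm ℓ (B ℓ))
    (ω : ℝ) (hω : ω ∈ Set.Ioo (0 : ℝ) 1) (ς : ℝ) (hς : ς ∈ Set.Ioc (0 : ℝ) 1)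
    (γζ : ℝ) (hγζ : γζ ∈ Set.Ioo (0 : ℝ) 1) (ϑd : ℝ) (hϑd : 0 < ϑd)
    (d : E) (hd : ‖d‖ ≤ ν) (hφ : ς * phiOpt j B ν ≤ dT j B d)
    (ζ : ℝ) (hζ : 0 < ζ)
    (herr : ∀ w : E, ‖w‖ ≤ ν →
      |dT j B w - dT j A w| ≤ ζ * ∑ ℓ ∈ Finset.Icc 1 j, ν ^ ℓ / (Nat.factorial ℓ : ℝ))
    (hfail : ω * dT j B d < ζ * ∑ ℓ ∈ Finset.Icc 1 j, ν ^ ℓ / (Nat.factorial ℓ : ℝ))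
    (hnoise : γζ * ζ ≤ ϑd) :
    phiOpt j A ν ≤ (4 * ϑd / (γζ * ω * ς)) * max ν (ν ^ j) := by
  obtain ⟨hω0, hω1⟩ := hω
  obtain ⟨hς0, hς1⟩ := hς
  obtain ⟨hγ0, hγ1⟩ := hγζ
  set S := ∑ ℓ ∈ Finset.Icc 1 j, ν ^ ℓ / (Nat.factorial ℓ : ℝ) with hSdef
  have hS0 : 0 < S := by
    refine Finset.sum_pos (fun ℓ _ => by positivity) ?_
    exact ⟨1, Finset.mem_Icc.2 ⟨le_refl 1, hj⟩⟩
  have hM : 0 < max ν (ν ^ j) := lt_max_of_lt_left hν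
  have hSle : S ≤ 2 * max ν (ν ^ j) := my_sum_bound j ν hν
  -- sup over the exact model
  rw [phiOpt]
  refine csSup_le ⟨dT j A 0, ⟨0, by simp [hν.le], rfl⟩⟩ ?_
  rintro y ⟨w, hw, rfl⟩
  -- dT A w ≤ dT B w + ζ S
  have h1 : dT j A w ≤ dT j B w + ζ * S := by
    have := herr w hw
    have := abs_le.1 this
    linarith [this.1]
  -- dT B w ≤ phiOpt B
  have h2 : dT j B w ≤ phiOpt j B ν :=
    le_csSup (dT_bddAbove j ν hν.le B) ⟨w, hw, rfl⟩
  -- ς * phiOpt B ≤ dT B d and ω * dT B d < ζ S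
  have h3 : ς * dT j B w ≤ dT j B d :=
    le_trans (by nlinarith) hφ
  have h4 : ω * ς * dT j B w < ζ * S := by nlinarith
  -- combine: dT A w ≤ ζS/(ως) + ζS ≤ 2ζS/(ως)
  have hως : 0 < ω * ς := mul_pos hω0 hς0
  have h5 : dT j B w < ζ * S / (ω * ς) := by
    rw [lt_div_iff₀ hως]; nlinarith
  have h6 : dT j A w < 2 * (ζ * S) / (ω * ς) := by
    have hle1 : ζ * S ≤ ζ * S / (ω * ς) := by
      rw [le_div_iff₀ hως]
      nlinarith [mul_le_one₀ hω1.le hς0.le hς1, mul_pos hζ hS0]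
    calc dT j A w ≤ dT j B w + ζ * S := h1
      _ < ζ * S / (ω * ς) + ζ * S / (ω * ς) := by linarith
      _ = 2 * (ζ * S) / (ω * ς) := by ring
  refine le_trans h6.le ?_
  -- 2 ζ S ≤ 4 (ϑd/γζ) M, then divide
  have hζb : ζ ≤ ϑd / γζ := (le_div_iff₀ hγ0).2 (by linarith [hnoise, mul_comm γζ ζ])
  have hnum : 2 * (ζ * S) ≤ 4 * (ϑd / γζ) * max ν (ν ^ j) := by
    have hd0 : 0 < ϑd / γζ := div_pos hϑd hγ0
    nlinarith
  have hrw : (4 * ϑd / (γζ * ω * ς)) * max ν (ν ^ j)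
      = (4 * (ϑd / γζ) * max ν (ν ^ j)) / (ω * ς) := by
    field_simp
  rw [hrw]
  gcongr
end
end

section
/- Let ω ∈ (0,1), ς ∈ (0,1], ϑ_f > 0, and let d with ‖d‖ ≤ δ satisfy ΔT̄(d) > 0 and ς·φ̄ ≤ ΔT̄(d). Suppose |ΔT̄(w) − ΔT(w)| ≤ ω·ΔT̄(d) for all ‖w‖ ≤ δ, and that ΔT̄(d) ≤ ϑ_f/ω. Then φ ≤ (ϑ_f/ς)·(1 + 1/ω). -/
noncomputable section

variable {E : Type*} [NormedAddCommGroup E] [InnerProductSpace ℝ E]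

/-- Optimality guarantee (3.28) of Theorem 3.8 at 'in-noise-f' termination:
if `d` with `‖d‖ ≤ δ` satisfies `ΔT̄(d) > 0`, `ς·φ̄ ≤ ΔT̄(d)`,
`|ΔT̄(w) − ΔT(w)| ≤ ω·ΔT̄(d)` for all `‖w‖ ≤ δ`, and `ΔT̄(d) ≤ ϑ_f/ω`, then
`φ ≤ (ϑ_f/ς)·(1 + 1/ω)`. -/
theorem phi_bound_in_noise_f (j : ℕ) (hj : 1 ≤ j) (δ : ℝ) (hδ : 0 < δ)
    (A B : (ℓ : ℕ) → ContinuousMultilinearMap ℝ (fun _ : Fin ℓ => E) ℝ)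
    (hsymA : ∀ ℓ ∈ Finset.Icc 1 j, SymmForm ℓ (A ℓ))
    (hsymB : ∀ ℓ ∈ Finset.Icc 1 j, SymmForm ℓ (B ℓ))
    (ω : ℝ) (hω : ω ∈ Set.Ioo (0 : ℝ) 1) (ς : ℝ) (hς : ς ∈ Set.Ioc (0 : ℝ) 1)
    (ϑf : ℝ) (hϑf : 0 < ϑf)
    (d : E) (hd : ‖d‖ ≤ δ) (hd0 : 0 < dT j B d)
    (hφ : ς * phiOpt j B δ ≤ dT j B d)
    (herr : ∀ w : E, ‖w‖ ≤ δ → |dT j B w - dT j A w| ≤ ω * dT j B d)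
    (hnoise : dT j B d ≤ ϑf / ω) :
    phiOpt j A δ ≤ (ϑf / ς) * (1 + 1 / ω) := by
  obtain ⟨hω0, hω1⟩ := hω
  obtain ⟨hς0, hς1⟩ := hς
  -- Bound each dT by the operator norms
  have hBdd : BddAbove {y : ℝ | ∃ w : E, ‖w‖ ≤ δ ∧ y = dT j B w} := by
    refine ⟨∑ ℓ ∈ Finset.Icc 1 j, (1 / (Nat.factorial ℓ : ℝ)) * ‖B ℓ‖ * δ ^ ℓ, ?_⟩
    rintro y ⟨w, hw, rfl⟩
    have h1 : dT j B w ≤ |∑ ℓ ∈ Finset.Icc 1 j,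
        (1 / (Nat.factorial ℓ : ℝ)) * B ℓ (fun _ => w)| := by
      rw [dT]
      exact neg_le_abs _
    refine h1.trans ((Finset.abs_sum_le_sum_abs _ _).trans (Finset.sum_le_sum ?_))
    intro ℓ _
    rw [abs_mul]
    have hfac : (0:ℝ) < (Nat.factorial ℓ : ℝ) := by positivity
    have h2 : |B ℓ (fun _ => w)| ≤ ‖B ℓ‖ * δ ^ ℓ := by
      have := (B ℓ).le_opNorm (fun _ => w)
      simp only [Real.norm_eq_abs] at this
      refine this.trans ?_
      have : ∏ _i : Fin ℓ, ‖w‖ = ‖w‖ ^ ℓ := by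
        simp [Finset.prod_const]
      rw [this]
      exact mul_le_mul_of_nonneg_left
        (pow_le_pow_left₀ (norm_nonneg w) hw ℓ) (norm_nonneg _)
    calc |1 / (Nat.factorial ℓ : ℝ)| * |B ℓ (fun _ => w)|
        ≤ (1 / (Nat.factorial ℓ : ℝ)) * (‖B ℓ‖ * δ ^ ℓ) := by
          rw [abs_of_pos (by positivity)]
          exact mul_le_mul_of_nonneg_left h2 (by positivity)
      _ = (1 / (Nat.factorial ℓ : ℝ)) * ‖B ℓ‖ * δ ^ ℓ := by ring
  -- φ̄ bound
  have hφB : phiOpt j B δ ≤ ϑf / (ς * ω) := by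
    have h1 : phiOpt j B δ ≤ dT j B d / ς := by
      rw [le_div_iff₀ hς0, mul_comm]
      exact hφ
    refine h1.trans ?_
    rw [div_le_div_iff₀ hς0 (by positivity)]
    have hnoise' : dT j B d * ω ≤ ϑf := by
      rw [le_div_iff₀ hω0] at hnoise; exact hnoise
    nlinarith [hnoise']
  have hωd : ω * dT j B d ≤ ϑf := by
    rw [le_div_iff₀ hω0] at hnoise
    linarith [hnoise]
  -- conclude
  have hpos : (0:ℝ) ≤ (ϑf / ς) * (1 + 1 / ω) := by positivity
  apply Real.sSup_le _ hpos
  rintro y ⟨w, hw, rfl⟩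
  have h1 : dT j A w ≤ dT j B w + ω * dT j B d := by
    have := herr w hw
    have := abs_le.mp this
    linarith [this.1]
  have h2 : dT j B w ≤ phiOpt j B δ := le_csSup hBdd ⟨w, hw, rfl⟩
  have h3 : dT j A w ≤ ϑf / (ς * ω) + ϑf := by linarith
  refine h3.trans ?_
  have hςϑ : ϑf ≤ ϑf / ς := by
    rw [le_div_iff₀ hς0]
    nlinarith
  have : ϑf / (ς * ω) = (ϑf / ς) * (1 / ω) := by
    field_simp
  rw [this] at h3 ⊢
  have : (ϑf / ς) * (1 + 1 / ω) = (ϑf / ς) * (1/ω) + ϑf / ς := by ring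
  rw [this]
  linarith
end
end

section
/- Let j ≥ 1 be an integer, δ > 0, and let f : ℝ^n → ℝ be j times continuously differentiable. Then the map x ↦ φ_{f,j}^δ(x) is continuous on ℝ^n. -/
/-!
The Taylor decrement `(x, d) ↦ ΔT_{f,j}(x, d)` is jointly continuous, since it is a finite
combination of the continuous derivatives `∇^ℓ f`, `ℓ ≤ j`, evaluated on the diagonal.
The optimality measure is its supremum over the compact ball `‖d‖ ≤ δ`, and the supremum
of a jointly continuous function over a fixed compact set depends continuously on the parameter.
-/

open Function Metric

theorem ContDiff.continuous_iteratedFDeriv_apply_diag {𝕜 E F : Type*} [NontriviallyNormedField 𝕜]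
    [NormedAddCommGroup E] [NormedSpace 𝕜 E] [NormedAddCommGroup F] [NormedSpace 𝕜 F]
    {f : E → F} {j ℓ : ℕ} (hf : ContDiff 𝕜 j f) (hℓ : ℓ ≤ j) :
    Continuous fun p : E × E => iteratedFDeriv 𝕜 ℓ f p.1 (fun _ => p.2) :=
  continuous_eval.comp
    (((hf.continuous_iteratedFDeriv (by exact_mod_cast hℓ)).comp continuous_fst).prodMk
      (continuous_pi fun _ => continuous_snd))

section TaylorDecrement

variable {E : Type*} [NormedAddCommGroup E] [NormedSpace ℝ E]

/-- `ΔT_{f,j}(x, d) = T_{f,j}(x, 0) − T_{f,j}(x, d)`. -/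
noncomputable def taylorDecrement (f : E → ℝ) (j : ℕ) (x d : E) : ℝ :=
  -∑ ℓ ∈ Finset.Icc 1 j, (1 / (Nat.factorial ℓ : ℝ)) * iteratedFDeriv ℝ ℓ f x (fun _ => d)

theorem continuous_taylorDecrement {f : E → ℝ} {j : ℕ} (hf : ContDiff ℝ j f) :
    Continuous ↿(taylorDecrement f j) :=
  (continuous_finsetSum _ fun _ hℓ => continuous_const.mul
    (hf.continuous_iteratedFDeriv_apply_diag (Finset.mem_Icc.mp hℓ).2)).neg

end TaylorDecrement

theorem phi_continuous_general (n : ℕ) (j : ℕ) (δ : ℝ)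
    (f : EuclideanSpace ℝ (Fin n) → ℝ) (hf : ContDiff ℝ j f) :
    Continuous (fun x : EuclideanSpace ℝ (Fin n) =>
      sSup {y : ℝ | ∃ d : EuclideanSpace ℝ (Fin n), ‖d‖ ≤ δ ∧
        y = -∑ ℓ ∈ Finset.Icc 1 j,
          (1 / (Nat.factorial ℓ : ℝ)) * iteratedFDeriv ℝ ℓ f x (fun _ => d)}) := by
  refine ((isCompact_closedBall 0 δ).continuous_sSup (continuous_taylorDecrement hf)).congr
    fun x => congrArg sSup ?_
  ext y
  simp [taylorDecrement, eq_comm]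

/-- Continuity of the order-`j` optimality measure: for `f : ℝⁿ → ℝ` of class
`C^j` (`j ≥ 1`) and `δ > 0`, the map
`x ↦ φ_{f,j}^δ(x) = sup_{‖d‖ ≤ δ} (−∑_{ℓ=1}^j (1/ℓ!) ∇^ℓ f(x)[d]^ℓ)`
is continuous. -/
theorem phi_continuous (n : ℕ) (j : ℕ) (hj : 1 ≤ j) (δ : ℝ) (hδ : 0 < δ)
    (f : EuclideanSpace ℝ (Fin n) → ℝ) (hf : ContDiff ℝ j f) :
    Continuous (fun x : EuclideanSpace ℝ (Fin n) =>
      sSup {y : ℝ | ∃ d : EuclideanSpace ℝ (Fin n), ‖d‖ ≤ δ ∧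
        y = -∑ ℓ ∈ Finset.Icc 1 j,
          (1 / (Nat.factorial ℓ : ℝ)) * iteratedFDeriv ℝ ℓ f x (fun _ => d)}) :=
  phi_continuous_general n j δ f hf
end
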